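/- If C_1 and C_2 are distinct circuits of a matroid M with |C_1 △ C_2| = 2, then D = C_1 ∪ C_2 is a double circuit of M, and the two singleton sets C_1 \ C_2 and C_2 \ C_1 are singular classes of its circuit partition. -/

import Mathlib

open Set Matroid

namespace Paper

variable {α : Type*}

/-- A circuit of a matroid: a minimal dependent set. -/
def IsCircuit (M : Matroid α) (C : Set α) : Prop :=
  M.Dep C ∧ ∀ x ∈ C, M.Indep (C \ {x})

/-- The rank of a set: the largest cardinality of an independent subset. -/
noncomputable def rk (M : Matroid α) (X : Set α) : ℕ :=
  sSup {n : ℕ | ∃ I, I ⊆ X ∧ M.Indep I ∧ I.ncard = n}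

/-- A double circuit: a (finite) set `D` with `r(D) = |D| - 2` such that deleting any
single element does not decrease the rank. -/
def DoubleCircuit (M : Matroid α) (D : Set α) : Prop :=
  D ⊆ M.E ∧ D.Finite ∧ rk M D + 2 = D.ncard ∧ ∀ d ∈ D, rk M (D \ {d}) = rk M D

/-- `P` is the circuit partition of `D`: a partition of `D` into nonempty classes such
that the circuits of `M` contained in `D` are exactly the complements (in `D`) of the
classes. -/
def IsCircuitPartition (M : Matroid α) (D : Set α) (P : Set (Set α)) : Prop :=
  (∀ p ∈ P, p.Nonempty) ∧ (∀ p ∈ P, p ⊆ D) ∧ (∀ d ∈ D, ∃! p, p ∈ P ∧ d ∈ p) ∧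
    ∀ C, (IsCircuit M C ∧ C ⊆ D) ↔ ∃ p ∈ P, C = D \ p

/-- A positive double circuit: one whose circuit partition has strictly more singular
(size-one) classes than multiple classes. -/
def PositiveDoubleCircuit (M : Matroid α) (D : Set α) : Prop :=
  DoubleCircuit M D ∧ ∃ P, IsCircuitPartition M D P ∧
    {p ∈ P | p.ncard ≠ 1}.ncard < {p ∈ P | p.ncard = 1}.ncard

/-- A hyperplane (copoint): a maximal proper flat. -/
def IsHyperplane (M : Matroid α) (H : Set α) : Prop :=
  M.IsFlat H ∧ H ≠ M.E ∧ ∀ F, M.IsFlat F → H ⊂ F → F = M.E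

/-- A coline: a flat of codimension two. -/
def IsColine (M : Matroid α) (L : Set α) : Prop :=
  M.IsFlat L ∧ rk M L + 2 = rk M M.E

/-- `P` is the copoint partition of the coline `L`: a partition of `M.E \ L` such that
the hyperplanes containing `L` are exactly the sets `L ∪ p` for classes `p`. -/
def IsCopointPartition (M : Matroid α) (L : Set α) (P : Set (Set α)) : Prop :=
  (∀ p ∈ P, p.Nonempty) ∧ (∀ p ∈ P, p ⊆ M.E \ L) ∧ (∀ d ∈ M.E \ L, ∃! p, p ∈ P ∧ d ∈ p) ∧
    ∀ H, (IsHyperplane M H ∧ L ⊆ H) ↔ ∃ p ∈ P, H = L ∪ p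

/-- A positive coline: one whose copoint partition has strictly more singular (size-one)
classes than multiple classes. -/
def PositiveColine (M : Matroid α) (L : Set α) : Prop :=
  IsColine M L ∧ ∃ P, IsCopointPartition M L P ∧
    {p ∈ P | p.ncard ≠ 1}.ncard < {p ∈ P | p.ncard = 1}.ncard

/-- A simple matroid: no loops and no parallel pairs. -/
def SimpleM (M : Matroid α) : Prop :=
  (∀ e ∈ M.E, M.Indep {e}) ∧ ∀ e f, e ∈ M.E → f ∈ M.E → e ≠ f → M.Indep {e, f}

/-- A coloop: an element contained in every base. -/
def IsColoop (M : Matroid α) (e : α) : Prop :=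
  e ∈ M.E ∧ ∀ B, M.IsBase B → e ∈ B

open Classical in
/-- The permutation of `α` exchanging `e` and `f`. -/
noncomputable def swapMap (e f : α) (x : α) : α :=
  if x = e then f else if x = f then e else x

/-- `e` and `f` are clones in `M` if exchanging them is an automorphism of `M`. -/
def Clones (M : Matroid α) (e f : α) : Prop :=
  e ∈ M.E ∧ f ∈ M.E ∧ ∀ I, M.Indep I ↔ M.Indep (swapMap e f '' I)

/-- Contraction of a set, defined by duality with deletion. -/
noncomputable def contract (M : Matroid α) (C : Set α) : Matroid α := (M✶ ↾ (M.E \ C))✶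

/-- Deletion of a set. -/
noncomputable def delete (M : Matroid α) (D : Set α) : Matroid α := M ↾ (M.E \ D)

/-- `N` is a minor of `M`. -/
def IsMinorOf (N M : Matroid α) : Prop :=
  ∃ C D, C ⊆ M.E ∧ D ⊆ M.E ∧ Disjoint C D ∧ N = Paper.delete (contract M C) D

/-! Circuits form an antichain, so `|C₁ △ C₂| = 2` forces `C₁ = I + a` and `C₂ = I + b` with
`I = C₁ ∩ C₂`. Then `I` spans `D = I + a + b`, giving `r(D) = |I| = |D| - 2`; every element of `D`
lies in one of the circuits `C₁, C₂ ⊆ D`, hence in the closure of the others, so deleting it does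
not lower the rank. The classes of `C₁` and `C₂` in the circuit partition are `D \ C₁ = {b}` and
`D \ C₂ = {a}`. -/

section

variable {M : Matroid α} {C C₁ C₂ D I X : Set α}

lemma isCircuit_iff_matroid_isCircuit : IsCircuit M C ↔ M.IsCircuit C :=
  isCircuit_iff_dep_forall_sdiff_singleton_indep.symm

lemma rk_eq_ncard_of_isBasis' (hI : M.IsBasis' I X) (hIfin : I.Finite) : rk M X = I.ncard := by
  refine IsGreatest.csSup_eq ⟨⟨I, hI.subset, hI.indep, rfl⟩, ?_⟩
  rintro _ ⟨J, hJX, hJ, rfl⟩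
  have hJfin : J.Finite := (hI.isRkFinite_of_finite hIfin).finite_of_indep_subset hJ hJX
  rw [← ENat.natCast_le_natCast, hJfin.cast_ncard_eq, hIfin.cast_ncard_eq, hI.encard_eq_eRk]
  exact hJ.encard_le_eRk_of_subset hJX

lemma cast_rk_eq_eRk (hX : M.IsRkFinite X) : (rk M X : ℕ∞) = M.eRk X := by
  obtain ⟨I, hI, hIfin⟩ := hX.exists_finite_isBasis'
  rw [rk_eq_ncard_of_isBasis' hI hIfin, hIfin.cast_ncard_eq, hI.encard_eq_eRk]

lemma doubleCircuit_iff_of_finite (hD : D.Finite) :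
    DoubleCircuit M D ↔ D ⊆ M.E ∧ M.eRk D + 2 = D.encard ∧
      ∀ d ∈ D, M.eRk (D \ {d}) = M.eRk D := by
  have hrk : ∀ X ⊆ D, (rk M X : ℕ∞) = M.eRk X :=
    fun X hX ↦ cast_rk_eq_eRk (M.isRkFinite_of_finite (hD.subset hX))
  simp only [DoubleCircuit, hD, true_and, ← hD.cast_ncard_eq, ← hrk D subset_rfl,
    ← hrk _ sdiff_subset, Nat.cast_inj]
  norm_cast

lemma eRk_sdiff_singleton_eq_of_mem_isCircuit {d : α} (hC : M.IsCircuit C) (hCD : C ⊆ D)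
    (hd : d ∈ C) : M.eRk (D \ {d}) = M.eRk D := by
  have hcl : d ∈ M.closure (D \ {d}) := M.closure_subset_closure
    (sdiff_subset_sdiff_left hCD) (hC.mem_closure_sdiff_singleton_of_mem hd)
  rw [← M.eRk_closure_eq, closure_sdiff_singleton_eq_closure hcl, eRk_closure_eq]

lemma _root_.Set.encard_union_eq_encard_inter_add_encard_symmDiff (s t : Set α) :
    (s ∪ t).encard = (s ∩ t).encard + (symmDiff s t).encard := by
  have hdisj : Disjoint (s ∩ t) (symmDiff s t) := (disjoint_symmDiff_inf s t).symm
  rw [← encard_union_eq hdisj]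
  exact congrArg encard (inf_sup_symmDiff s t).symm

lemma ncard_sdiff_eq_one_of_ncard_symmDiff_eq_two (hC₁ : M.IsCircuit C₁)
    (hC₂ : M.IsCircuit C₂) (hsd : (symmDiff C₁ C₂).ncard = 2) : (C₁ \ C₂).ncard = 1 := by
  have hfin : (symmDiff C₁ C₂).Finite := finite_of_ncard_ne_zero (by omega)
  have hne : C₁ ≠ C₂ := by rintro rfl; simp at hsd
  have h₁ : (C₁ \ C₂).Nonempty :=
    sdiff_nonempty.2 fun h ↦ hne (hC₁.eq_of_subset_isCircuit hC₂ h)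
  have h₂ : (C₂ \ C₁).Nonempty :=
    sdiff_nonempty.2 fun h ↦ hne (hC₂.eq_of_subset_isCircuit hC₁ h).symm
  have hsum : (C₁ \ C₂).ncard + (C₂ \ C₁).ncard = 2 := by
    rw [← ncard_union_eq disjoint_sdiff_sdiff (hfin.subset subset_union_left)
      (hfin.subset subset_union_right)]
    exact hsd
  have := (ncard_pos (hfin.subset subset_union_left)).2 h₁
  have := (ncard_pos (hfin.subset subset_union_right)).2 h₂
  omega

lemma isBasis_inter_union_of_sdiff_eq_singleton {a b : α} (hC₁ : M.IsCircuit C₁)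
    (hC₂ : M.IsCircuit C₂) (ha : C₁ \ C₂ = {a}) (hb : C₂ \ C₁ = {b}) :
    M.IsBasis (C₁ ∩ C₂) (C₁ ∪ C₂) := by
  have ha' : C₁ \ {a} = C₁ ∩ C₂ := by rw [← ha, sdiff_sdiff_right_self]
  have hb' : C₂ \ {b} = C₁ ∩ C₂ := by rw [← hb, sdiff_sdiff_right_self, inter_comm]
  refine isBasis_iff_indep_subset_closure.2
    ⟨?_, inter_subset_left.trans subset_union_left, ?_⟩
  · exact ha' ▸ hC₁.sdiff_singleton_indep (ha.symm.subset rfl).1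
  · exact union_subset (ha' ▸ hC₁.subset_closure_sdiff_singleton a)
      (hb' ▸ hC₂.subset_closure_sdiff_singleton b)

lemma IsCircuitPartition.sdiff_mem {P : Set (Set α)} (hP : IsCircuitPartition M D P)
    (hC : IsCircuit M C) (hCD : C ⊆ D) : D \ C ∈ P := by
  obtain ⟨p, hp, rfl⟩ := (hP.2.2.2 C).1 ⟨hC, hCD⟩
  rwa [sdiff_sdiff_cancel_left (hP.2.1 p hp)]

end

theorem union_of_close_circuits_is_double_circuit_general {α : Type*} (M : Matroid α)
    [M.Finite] (C₁ C₂ : Set α) (h₁ : IsCircuit M C₁) (h₂ : IsCircuit M C₂)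
    (hsd : (symmDiff C₁ C₂).ncard = 2) :
    DoubleCircuit M (C₁ ∪ C₂) ∧
      ∀ P, IsCircuitPartition M (C₁ ∪ C₂) P →
        (C₁ \ C₂) ∈ P ∧ (C₂ \ C₁) ∈ P ∧
          (C₁ \ C₂).ncard = 1 ∧ (C₂ \ C₁).ncard = 1 := by
  have hC₁ := isCircuit_iff_matroid_isCircuit.1 h₁
  have hC₂ := isCircuit_iff_matroid_isCircuit.1 h₂
  have ha := ncard_sdiff_eq_one_of_ncard_symmDiff_eq_two hC₁ hC₂ hsd
  have hb := ncard_sdiff_eq_one_of_ncard_symmDiff_eq_two hC₂ hC₁ (symmDiff_comm C₁ C₂ ▸ hsd)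
  obtain ⟨a, ha'⟩ := ncard_eq_one.1 ha
  obtain ⟨b, hb'⟩ := ncard_eq_one.1 hb
  have hbasis := isBasis_inter_union_of_sdiff_eq_singleton hC₁ hC₂ ha' hb'
  have hfin : (C₁ ∪ C₂).Finite := M.ground_finite.subset hbasis.subset_ground
  refine ⟨(doubleCircuit_iff_of_finite hfin).2 ⟨hbasis.subset_ground, ?_, ?_⟩, fun P hP ↦ ?_⟩
  · have hsd' : (symmDiff C₁ C₂).encard = 2 := by
      rw [← (finite_of_ncard_ne_zero (hsd ▸ two_ne_zero)).cast_ncard_eq, hsd]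
      rfl
    rw [← hbasis.encard_eq_eRk, encard_union_eq_encard_inter_add_encard_symmDiff, hsd']
  · rintro d (hd | hd)
    · exact eRk_sdiff_singleton_eq_of_mem_isCircuit hC₁ subset_union_left hd
    · exact eRk_sdiff_singleton_eq_of_mem_isCircuit hC₂ subset_union_right hd
  · refine ⟨?_, ?_, ha, hb⟩
    · simpa only [union_sdiff_right] using hP.sdiff_mem h₂ subset_union_right
    · simpa only [union_sdiff_left] using hP.sdiff_mem h₁ subset_union_left

/-- if `C₁ ≠ C₂` are circuits with `|C₁ △ C₂| = 2`, then `C₁ ∪ C₂` is a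
double circuit whose circuit partition has `C₁ \ C₂` and `C₂ \ C₁` as singular
classes. -/
theorem union_of_close_circuits_is_double_circuit {α : Type*} (M : Matroid α)
    [M.Finite] (C₁ C₂ : Set α) (h₁ : IsCircuit M C₁) (h₂ : IsCircuit M C₂)
    (hne : C₁ ≠ C₂) (hsd : (symmDiff C₁ C₂).ncard = 2) :
    DoubleCircuit M (C₁ ∪ C₂) ∧
      ∀ P, IsCircuitPartition M (C₁ ∪ C₂) P →
        (C₁ \ C₂) ∈ P ∧ (C₂ \ C₁) ∈ P ∧
          (C₁ \ C₂).ncard = 1 ∧ (C₂ \ C₁).ncard = 1 :=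
  union_of_close_circuits_is_double_circuit_general M C₁ C₂ h₁ h₂ hsd

end Paper
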